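/- For every finite word w over {1,2}, the vector (x,y,z)^T = E_w (1,1,3)^T satisfies: x >= 0, y >= 0, z >= 0, z >= x, and x - 4y + 11z >= 0. -/

import Mathlib

open Matrix BigOperators

/-- The matrix `E_0`. -/
noncomputable def E0 : Matrix (Fin 3) (Fin 3) ℝ :=
  !![47/75, -1/25, -1/25; 14/75, 3/25, -2/25; 14/75, -2/25, 3/25]

/-- The matrix `E_1`. -/
noncomputable def E1 : Matrix (Fin 3) (Fin 3) ℝ :=
  !![3/25, 14/75, -2/25; -1/25, 47/75, -1/25; -2/25, 14/75, 3/25]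

/-- The matrix `E_2`. -/
noncomputable def E2 : Matrix (Fin 3) (Fin 3) ℝ :=
  !![3/25, -2/25, 14/75; -2/25, 3/25, 14/75; -1/25, -1/25, 47/75]

/-- `Emat i` is the matrix `E_i`. -/
noncomputable def Emat : Fin 3 → Matrix (Fin 3) (Fin 3) ℝ := ![E0, E1, E2]

/-- For a word `w = [w₁, ..., wₘ]`, `Eword w = E_{wₘ} * ⋯ * E_{w₁}`
(the empty word giving the identity matrix). -/
noncomputable def Eword (w : List (Fin 3)) : Matrix (Fin 3) (Fin 3) ℝ :=
  ((w.map Emat).reverse).prod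

/-!
`E_1` and `E_2` have eigenvalues `3/5, 1/5, 1/15`, with `p₁ = (1,3,1)` resp. `p₂ = (1,1,3)` as
dominant eigenvectors, and `E_1 p₂ = E_2 p₁ ∝ q = (1,7,7)`. Projectively, the orbit of `p₂` under
words in `E_1, E_2` accumulates on a convex arc from `p₁` through `q` to `p₂`. The quadrilateral cut out by
the chord `p₁p₂` and the tangents to the arc at `p₁`, `q`, `p₂` (its vertices are `p₁`, `(1,9,5)`,
`(1,5,9)`, `p₂`) is mapped into itself by `E_1` and `E_2`, and it lies in the five half-spaces
of the claim.
-/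

open Set

def invariantCone : Set (Fin 3 → ℝ) :=
  {u | 0 ≤ 14 * u 0 - u 1 - u 2 ∧ 0 ≤ 3 * u 0 - 2 * u 1 + 3 * u 2 ∧
    0 ≤ 3 * u 0 + 3 * u 1 - 2 * u 2 ∧ 0 ≤ u 1 + u 2 - 4 * u 0}

lemma Eword_cons (a : Fin 3) (w : List (Fin 3)) : Eword (a :: w) = Eword w * Emat a := by
  simp [Eword, List.prod_append]

lemma mapsTo_Eword_mulVec {S : Set (Fin 3 → ℝ)} {w : List (Fin 3)}
    (h : ∀ i ∈ w, MapsTo (Emat i *ᵥ ·) S S) : MapsTo (Eword w *ᵥ ·) S S := by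
  induction w with
  | nil => intro u hu; simpa [Eword] using hu
  | cons a w ih =>
    intro u hu
    simp only [Eword_cons, ← mulVec_mulVec]
    exact ih (fun i hi => h i (List.mem_cons_of_mem a hi)) (h a List.mem_cons_self hu)

lemma mapsTo_Emat_mulVec_invariantCone {i : Fin 3} (hi : i = 1 ∨ i = 2) :
    MapsTo (Emat i *ᵥ ·) invariantCone invariantCone := by
  rintro u ⟨h₁, h₂, h₃, h₄⟩
  rcases hi with rfl | rfl <;>
    simp only [invariantCone, mem_ofPred_eq, mulVec, dotProduct, Fin.sum_univ_three, Emat, E1, E2,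
      of_apply, cons_val', cons_val_zero, cons_val_one, cons_val, cons_val_fin_one] <;>
    refine ⟨?_, ?_, ?_, ?_⟩ <;> linarith

lemma bounds_of_mem_invariantCone {u : Fin 3 → ℝ} (hu : u ∈ invariantCone) :
    0 ≤ u 0 ∧ 0 ≤ u 1 ∧ 0 ≤ u 2 ∧ u 0 ≤ u 2 ∧ 0 ≤ u 0 - 4 * u 1 + 11 * u 2 := by
  obtain ⟨h₁, h₂, h₃, h₄⟩ := hu
  refine ⟨?_, ?_, ?_, ?_, ?_⟩ <;> linarith

/-- For every finite word `w` over `{1,2}`, the vector `(x,y,z)ᵀ = E_w (1,1,3)ᵀ`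
satisfies `x ≥ 0`, `y ≥ 0`, `z ≥ 0`, `z ≥ x`, and `x - 4y + 11z ≥ 0`. -/
theorem stmt_5 (w : List (Fin 3)) (hw : ∀ i ∈ w, i = 1 ∨ i = 2) :
    0 ≤ (Eword w *ᵥ ![1, 1, 3]) 0 ∧
    0 ≤ (Eword w *ᵥ ![1, 1, 3]) 1 ∧
    0 ≤ (Eword w *ᵥ ![1, 1, 3]) 2 ∧
    (Eword w *ᵥ ![1, 1, 3]) 0 ≤ (Eword w *ᵥ ![1, 1, 3]) 2 ∧
    0 ≤ (Eword w *ᵥ ![1, 1, 3]) 0 - 4 * (Eword w *ᵥ ![1, 1, 3]) 1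
        + 11 * (Eword w *ᵥ ![1, 1, 3]) 2 := by
  have hp₂ : ![(1 : ℝ), 1, 3] ∈ invariantCone := by norm_num [invariantCone, cons_val_two]
  exact bounds_of_mem_invariantCone <|
    mapsTo_Eword_mulVec (fun i hi => mapsTo_Emat_mulVec_invariantCone (hw i hi)) hp₂
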